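/- Let p₀ and q be probability densities on a σ-finite measure space (Ω, μ), let P₀ be the probability measure with density p₀, let X₁, …, Xₙ be i.i.d. with law P₀, and write v = d_H(p₀, q). Then for every constant 0 < c < 1, P₀^n( ∏_{k=1}^n q(X_k) ≥ exp(−n c v²) · ∏_{k=1}^n p₀(X_k) ) ≤ exp( −n v² (1 − c) / 2 ). -/

import Mathlib

open MeasureTheory Real

/-- A (probability) density on `(Ω, μ)`: a nonnegative measurable function integrating to 1. -/
def IsDensity {Ω : Type*} [MeasurableSpace Ω] (μ : Measure Ω) (p : Ω → ℝ) : Prop :=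
  Measurable p ∧ (∀ x, 0 ≤ p x) ∧ Integrable p μ ∧ ∫ x, p x ∂μ = 1

/-- Squared Hellinger distance `d_H²(p, q) = ∫ (√p − √q)² dμ`. -/
noncomputable def hellSq {Ω : Type*} [MeasurableSpace Ω] (μ : Measure Ω) (p q : Ω → ℝ) : ℝ :=
  ∫ x, (Real.sqrt (p x) - Real.sqrt (q x)) ^ 2 ∂μ

/-- Hellinger distance `d_H(p, q) = (∫ (√p − √q)² dμ)^{1/2}`. -/
noncomputable def hellDist {Ω : Type*} [MeasurableSpace Ω] (μ : Measure Ω) (p q : Ω → ℝ) : ℝ :=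
  Real.sqrt (hellSq μ p q)

/-! Markov's inequality applied to the square root of the likelihood ratio,
`∏ √(q(X_k)/p₀(X_k)) ≥ exp(-n c v²/2)`. Its `P₀^n`-expectation factorises into the `n`-th power
of the Hellinger affinity `∫ √(p₀ q) dμ = 1 - v²/2 ≤ exp(-v²/2)`. -/

open scoped ENNReal

section Hellinger

variable {Ω : Type*} [MeasurableSpace Ω] {μ : Measure Ω} {p q : Ω → ℝ}

lemma hellDist_sq : hellDist μ p q ^ 2 = hellSq μ p q :=
  Real.sq_sqrt (integral_nonneg fun _ => sq_nonneg _)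

lemma IsDensity.integrable_sqrt_mul_sqrt (hp : IsDensity μ p) (hq : IsDensity μ q) :
    Integrable (fun x => √(p x) * √(q x)) μ := by
  refine (hp.2.2.1.add hq.2.2.1).mono' (hp.1.sqrt.mul hq.1.sqrt).aestronglyMeasurable
    (ae_of_all _ fun x => ?_)
  rw [Real.norm_of_nonneg (by positivity), Pi.add_apply]
  nlinarith [Real.sq_sqrt (hp.2.1 x), Real.sq_sqrt (hq.2.1 x), sq_nonneg (√(p x) - √(q x))]

lemma IsDensity.integral_sqrt_mul_sqrt (hp : IsDensity μ p) (hq : IsDensity μ q) :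
    ∫ x, √(p x) * √(q x) ∂μ = 1 - hellSq μ p q / 2 := by
  have hpq : Integrable (fun x => p x + q x) μ := hp.2.2.1.add hq.2.2.1
  have hexpand : ∀ x, (√(p x) - √(q x)) ^ 2 = (p x + q x) - 2 * (√(p x) * √(q x)) := by
    intro x
    rw [sub_sq, Real.sq_sqrt (hp.2.1 x), Real.sq_sqrt (hq.2.1 x)]
    ring
  have h : hellSq μ p q = (1 + 1) - 2 * ∫ x, √(p x) * √(q x) ∂μ := by
    rw [hellSq, integral_congr_ae (ae_of_all _ hexpand),
      integral_sub hpq ((hp.integrable_sqrt_mul_sqrt hq).const_mul 2),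
      integral_add hp.2.2.1 hq.2.2.1, integral_const_mul, hp.2.2.2, hq.2.2.2]
  linarith

lemma ae_withDensity_ofReal_pos (hp : Measurable p) :
    ∀ᵐ x ∂μ.withDensity (fun x => ENNReal.ofReal (p x)), 0 < p x :=
  (ae_withDensity_iff hp.ennreal_ofReal).2 <|
    ae_of_all _ fun _ hx => ENNReal.ofReal_pos.1 (pos_iff_ne_zero.2 hx)

lemma mul_sqrt_div_eq_sqrt_mul_sqrt {a b : ℝ} (ha : 0 ≤ a) : a * √(b / a) = √a * √b := by
  rcases ha.eq_or_lt with rfl | ha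
  · simp
  have hsa : √a ≠ 0 := (Real.sqrt_pos.2 ha).ne'
  rw [Real.sqrt_div' _ ha.le]
  nth_rewrite 1 [← Real.mul_self_sqrt ha.le]
  field_simp

lemma measurable_ofReal_sqrt_div (hp : Measurable p) (hq : Measurable q) :
    Measurable fun x => ENNReal.ofReal √(q x / p x) :=
  (hq.div hp).sqrt.ennreal_ofReal

lemma IsDensity.lintegral_sqrt_div_withDensity_le (hp : IsDensity μ p) (hq : IsDensity μ q) :
    ∫⁻ x, ENNReal.ofReal √(q x / p x) ∂μ.withDensity (fun x => ENNReal.ofReal (p x))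
      ≤ ENNReal.ofReal (exp (-(hellSq μ p q / 2))) := by
  rw [lintegral_withDensity_eq_lintegral_mul _ hp.1.ennreal_ofReal
    (measurable_ofReal_sqrt_div hp.1 hq.1)]
  calc ∫⁻ x, ENNReal.ofReal (p x) * ENNReal.ofReal √(q x / p x) ∂μ
      = ∫⁻ x, ENNReal.ofReal (√(p x) * √(q x)) ∂μ := by
        refine lintegral_congr fun x => ?_
        rw [← ENNReal.ofReal_mul (hp.2.1 x), mul_sqrt_div_eq_sqrt_mul_sqrt (hp.2.1 x)]
    _ = ENNReal.ofReal (∫ x, √(p x) * √(q x) ∂μ) :=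
        (ofReal_integral_eq_lintegral_ofReal (hp.integrable_sqrt_mul_sqrt hq)
          (ae_of_all _ fun _ => by positivity)).symm
    _ ≤ ENNReal.ofReal (exp (-(hellSq μ p q / 2))) := by
        rw [hp.integral_sqrt_mul_sqrt hq]
        exact ENNReal.ofReal_le_ofReal (by linarith [add_one_le_exp (-(hellSq μ p q / 2))])

end Hellinger

lemma ae_pi_forall_of_ae {ι Ω : Type*} [Fintype ι] [MeasurableSpace Ω] {P : Measure Ω}
    [SigmaFinite P] {Q : Ω → Prop} (h : ∀ᵐ x ∂P, Q x) :
    ∀ᵐ x ∂Measure.pi (fun _ : ι => P), ∀ i, Q (x i) :=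
  ae_all_iff.2 fun i => (Measure.tendsto_eval_ae_ae (i := i)).eventually h

section Product

variable {ι Ω : Type*} [Fintype ι] [MeasurableSpace Ω] {P : Measure Ω} [IsProbabilityMeasure P]
  {g : Ω → ℝ≥0∞}

lemma lintegral_pi_prod_eq_pow (hg : Measurable g) :
    ∫⁻ x : ι → Ω, ∏ i, g (x i) ∂Measure.pi (fun _ => P) = (∫⁻ x, g x ∂P) ^ Fintype.card ι := by
  rw [ProbabilityTheory.lintegral_prod_eq_prod_lintegral_of_indepFun _ _
    (ProbabilityTheory.iIndepFun_pi (X := fun _ => g) fun _ => hg.aemeasurable)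
    fun i => hg.comp (measurable_pi_apply i)]
  simp_rw [(measurePreserving_eval (fun _ : ι => P) _).lintegral_comp hg]
  rw [Finset.prod_const, Finset.card_univ]

lemma pi_prod_ge_le_lintegral_pow_div (hg : Measurable g) {a : ℝ≥0∞} (ha : a ≠ 0) (ha' : a ≠ ∞) :
    Measure.pi (fun _ : ι => P) {x | a ≤ ∏ i, g (x i)}
      ≤ (∫⁻ x, g x ∂P) ^ Fintype.card ι / a := by
  rw [← lintegral_pi_prod_eq_pow hg]
  exact meas_ge_le_lintegral_div
    (Finset.measurable_prod _ fun i _ => hg.comp (measurable_pi_apply i)).aemeasurable ha ha'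

end Product

lemma exp_half_le_prod_sqrt_div {ι : Type*} (s : Finset ι) {p q : ι → ℝ} {t : ℝ}
    (hp : ∀ i ∈ s, 0 < p i) (hq : ∀ i ∈ s, 0 ≤ q i) (h : exp t * ∏ i ∈ s, p i ≤ ∏ i ∈ s, q i) :
    exp (t / 2) ≤ ∏ i ∈ s, √(q i / p i) := by
  rw [← Real.sqrt_prod _ fun i hi => div_nonneg (hq i hi) (hp i hi).le, Finset.prod_div_distrib,
    exp_half]
  exact Real.sqrt_le_sqrt ((le_div_iff₀ (Finset.prod_pos hp)).2 h)

theorem likelihood_ratio_tail_bound_hellinger_general {Ω : Type*} [MeasurableSpace Ω]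
    (μ : Measure Ω) (p₀ q : Ω → ℝ)
    (hp₀ : IsDensity μ p₀) (hq : IsDensity μ q)
    (P₀ : Measure Ω) [IsProbabilityMeasure P₀]
    (hP₀ : P₀ = μ.withDensity fun x => ENNReal.ofReal (p₀ x))
    (n : ℕ) (c : ℝ) :
    (Measure.pi fun _ : Fin n => P₀)
        {x : Fin n → Ω |
          Real.exp (-(n : ℝ) * (c * hellDist μ p₀ q ^ 2)) * ∏ k : Fin n, p₀ (x k)
            ≤ ∏ k : Fin n, q (x k)}
      ≤ ENNReal.ofReal (Real.exp (-(n : ℝ) * hellDist μ p₀ q ^ 2 * (1 - c) / 2)) := by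
  rw [hellDist_sq]
  set v2 := hellSq μ p₀ q
  have hpos : ∀ᵐ x ∂Measure.pi (fun _ : Fin n => P₀), ∀ k, 0 < p₀ (x k) :=
    ae_pi_forall_of_ae (hP₀ ▸ ae_withDensity_ofReal_pos hp₀.1)
  set a := ENNReal.ofReal (exp (-n * (c * v2) / 2))
  have ha : a ≠ 0 := ENNReal.ofReal_pos.2 (exp_pos _) |>.ne'
  calc _ ≤ Measure.pi (fun _ : Fin n => P₀)
          {x | a ≤ ∏ k, ENNReal.ofReal √(q (x k) / p₀ (x k))} := by
        refine measure_mono_ae (hpos.mono fun x hx hev => ?_)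
        exact (ENNReal.ofReal_le_ofReal <| exp_half_le_prod_sqrt_div _ (fun k _ => hx k)
          (fun k _ => hq.2.1 _) hev).trans_eq
          (ENNReal.ofReal_prod_of_nonneg fun _ _ => Real.sqrt_nonneg _)
    _ ≤ (∫⁻ x, ENNReal.ofReal √(q x / p₀ x) ∂P₀) ^ n / a := by
        simpa only [Fintype.card_fin] using
          pi_prod_ge_le_lintegral_pow_div (ι := Fin n) (measurable_ofReal_sqrt_div hp₀.1 hq.1) ha
            ENNReal.ofReal_ne_top
    _ ≤ ENNReal.ofReal (exp (-(v2 / 2))) ^ n / a := by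
        gcongr
        exact hP₀ ▸ hp₀.lintegral_sqrt_div_withDensity_le hq
    _ = ENNReal.ofReal (exp (-n * v2 * (1 - c) / 2)) := by
        rw [← ENNReal.ofReal_pow (exp_pos _).le, ← ENNReal.ofReal_div_of_pos (exp_pos _),
          ← exp_nat_mul, ← exp_sub]
        ring_nf

/-- With `v = d_H(p₀, q)`, for every `0 < c < 1`,
`P₀^n( ∏ q(X_k) ≥ exp(−n c v²) ∏ p₀(X_k) ) ≤ exp( −n v² (1−c)/2 )`. -/
theorem likelihood_ratio_tail_bound_hellinger {Ω : Type*} [MeasurableSpace Ω]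
    (μ : Measure Ω) [SigmaFinite μ] (p₀ q : Ω → ℝ)
    (hp₀ : IsDensity μ p₀) (hq : IsDensity μ q)
    (P₀ : Measure Ω) [IsProbabilityMeasure P₀]
    (hP₀ : P₀ = μ.withDensity fun x => ENNReal.ofReal (p₀ x))
    (n : ℕ) (hn : 0 < n) (c : ℝ) (hc0 : 0 < c) (hc1 : c < 1) :
    (Measure.pi fun _ : Fin n => P₀)
        {x : Fin n → Ω |
          Real.exp (-(n : ℝ) * (c * hellDist μ p₀ q ^ 2)) * ∏ k : Fin n, p₀ (x k)
            ≤ ∏ k : Fin n, q (x k)}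
      ≤ ENNReal.ofReal (Real.exp (-(n : ℝ) * hellDist μ p₀ q ^ 2 * (1 - c) / 2)) :=
  likelihood_ratio_tail_bound_hellinger_general μ p₀ q hp₀ hq P₀ hP₀ n c
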